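/- Fix integers l ≥ 1, n ≥ 0, d ≥ 1, a tuple c = (c_0,…,c_{l−1}) of nonnegative integers with c_0+…+c_{l−1} = d, a tuple r = (r_0,…,r_{l−1}) of integers with r_0+…+r_{l−1} = 0, and a permutation w of {0,…,l−1}; set m_p = c_0+…+c_p, J = {j : c_j = 0}, and I_t = {p : m_p = t} for 0 ≤ t ≤ d. For an l-multipartition λ of n let C(λ)^p = β^{r_p}(λ^{(w^{−1}(p))}), and let C̃(λ) denote the unique admissible tuple for C(λ). Then for any two l-multipartitions λ, μ of n: χ(C̃(λ)) = χ(C̃(μ)) (equivalently, the partitions whose β-numbers enumerate χ(C̃(λ)) and χ(C̃(μ)), i.e. the J-hearts of λ and μ, coincide) if and only if C(λ)_{[t]} = C(μ)_{[t]} as multisets for all 0 ≤ t ≤ d. -/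

import Mathlib

/-- A partition: a weakly decreasing, eventually-zero sequence of naturals.
`part i` is the `(i+1)`-st part `λ_{i+1}`. -/
structure PartitionSeq where
  part : ℕ → ℕ
  antitone : Antitone part
  eventually_zero : ∃ N, ∀ i ≥ N, part i = 0

/-- The length `L(λ)`: the number of nonzero parts. -/
noncomputable def PartitionSeq.length (lam : PartitionSeq) : ℕ :=
  Set.ncard {i : ℕ | lam.part i ≠ 0}

/-- The size `|λ|`: the sum of the parts. -/
noncomputable def PartitionSeq.size (lam : PartitionSeq) : ℕ :=
  ∑ i ∈ Finset.range lam.length, lam.part i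

/-- `beta lam r i` is the `(i+1)`-st entry `β^r(λ)_{i+1} = λ_{i+1} + r - i` of the
`r`-shifted β-number (0-indexed version of `β^r(λ)_i = λ_i + r + 1 - i`). -/
def PartitionSeq.beta (lam : PartitionSeq) (r : ℤ) (i : ℕ) : ℤ :=
  (lam.part i : ℤ) + r - (i : ℤ)

/-- The residue `Res_λ(x) = Σ_{(a,b) ∈ Y(λ)} x^{cont(a,b)}` as a Laurent polynomial. -/
noncomputable def PartitionSeq.residue (lam : PartitionSeq) : LaurentPolynomial ℤ :=
  ∑ a ∈ Finset.range lam.length, ∑ b ∈ Finset.range (lam.part a),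
    LaurentPolynomial.T ((b : ℤ) - (a : ℤ))

/-- The residue with `x ↦ x^d` substituted: `Res_λ(x^d)`. -/
noncomputable def PartitionSeq.residuePow (lam : PartitionSeq) (d : ℕ) : LaurentPolynomial ℤ :=
  ∑ a ∈ Finset.range lam.length, ∑ b ∈ Finset.range (lam.part a),
    LaurentPolynomial.T ((d : ℤ) * ((b : ℤ) - (a : ℤ)))

/-- A strictly decreasing integer sequence `C` stabilises with respect to `r` if
`C_i = r + 1 - i` for all large `i` (0-indexed: `C i = r - i`). -/
def Stabilises (C : ℕ → ℤ) (r : ℤ) : Prop :=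
  ∃ K : ℕ, ∀ i ≥ K, C i = r - (i : ℤ)

/-- The partial sum `m_p(c) = c_0 + ⋯ + c_p`. -/
def psum {l : ℕ} (c : Fin l → ℕ) (p : Fin l) : ℕ := ∑ j ∈ Finset.Iic p, c j

/-- The multiplicity at `z ∈ ℤ` of the multiset `C_{[t]}`, for `0 ≤ t ≤ d`,
where `I_t = {p : m_p(c) = t}`; for `t = 0` or `t = d` this is the common multiset
`C_{[0]} = C_{[d]}` built from `I_0` (with entries shifted by `-1`) and `I_d`. -/
noncomputable def multAt {l : ℕ} (d : ℕ) (c : Fin l → ℕ) (C : Fin l → ℕ → ℤ)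
    (t : ℕ) (z : ℤ) : ℕ :=
  if t = 0 ∨ t = d then
    Nat.card {pi : Fin l × ℕ // psum c pi.1 = 0 ∧ C pi.1 pi.2 - 1 = z} +
    Nat.card {pi : Fin l × ℕ // psum c pi.1 = d ∧ C pi.1 pi.2 = z}
  else
    Nat.card {pi : Fin l × ℕ // psum c pi.1 = t ∧ C pi.1 pi.2 = z}

/-- The set `χ(C) = {l(C^q_i − 1) + q + 1 : 0 ≤ q ≤ l−1, i ≥ 1} ⊆ ℤ`. -/
def chiSet (l : ℕ) (C : Fin l → ℕ → ℤ) : Set ℤ :=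
  {z : ℤ | ∃ (q : Fin l) (i : ℕ), z = (l : ℤ) * (C q i - 1) + (q : ℤ) + 1}

/-- `Ct` is an admissible tuple for `C` (with respect to the data `d`, `c`):
(i) each `Ct p` is strictly decreasing; (ii) the multisets `Ct_{[t]}` and `C_{[t]}`
agree for all `0 ≤ t ≤ d`; (iii) for `0 ≠ p ∈ J = {j : c_j = 0}`, every term of `Ct p`
is a term of `Ct (p-1)`; (iv) if `0 ∈ J`, then for every term `z` of `Ct 0`,
`z - 1` is a term of `Ct (l-1)`. -/
def IsAdmissible {l : ℕ} (d : ℕ) (c : Fin l → ℕ) (C Ct : Fin l → ℕ → ℤ) : Prop :=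
  (∀ p : Fin l, StrictAnti (Ct p)) ∧
  (∀ t ≤ d, ∀ z : ℤ, multAt d c Ct t z = multAt d c C t z) ∧
  (∀ p : Fin l, c p = 0 → (p : ℕ) ≠ 0 →
    ∀ i : ℕ, ∃ i' : ℕ,
      Ct ⟨(p : ℕ) - 1, lt_of_le_of_lt (Nat.sub_le _ _) p.isLt⟩ i' = Ct p i) ∧
  (∀ h0 : 0 < l, c ⟨0, h0⟩ = 0 →
    ∀ i : ℕ, ∃ i' : ℕ, Ct ⟨l - 1, Nat.sub_lt h0 Nat.one_pos⟩ i' = Ct ⟨0, h0⟩ i - 1)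

/-- The Young diagram of a partition, with 0-indexed nodes:
`(a,b)` is a node iff `b < λ_{a+1}`. -/
def YoungSet (lam : PartitionSeq) : Set (ℕ × ℕ) :=
  {ab : ℕ × ℕ | ab.2 < lam.part ab.1}

/-- `S` is the Young diagram of the partition `mu`. -/
def IsDiagramOf (S : Set (ℕ × ℕ)) (mu : PartitionSeq) : Prop :=
  S = YoungSet mu

/-- The node `ab` of `Y(λ)` is removable: deleting it leaves the Young diagram
of some partition. -/
def IsRemovableNode (lam : PartitionSeq) (ab : ℕ × ℕ) : Prop :=
  ab ∈ YoungSet lam ∧ ∃ mu : PartitionSeq, IsDiagramOf (YoungSet lam \ {ab}) mu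

/-- The node `ab` of `Y(λ)` is `j`-removable (mod `l`): it is removable and its
content is congruent to `j` mod `l`. -/
def IsJRemovable (l j : ℕ) (lam : PartitionSeq) (ab : ℕ × ℕ) : Prop :=
  IsRemovableNode lam ab ∧ ((ab.2 : ℤ) - (ab.1 : ℤ)) ≡ (j : ℤ) [ZMOD (l : ℤ)]

/-- The node `ab` is `J`-removable for a set `J` of residues: `j`-removable
for some `j ∈ J`. -/
def IsSetRemovable (l : ℕ) (J : Set ℕ) (lam : PartitionSeq) (ab : ℕ × ℕ) : Prop :=
  ∃ j ∈ J, IsJRemovable l j lam ab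

/-- `mu` is obtained from `lam` by deleting a single `J`-removable node. -/
def RemoveStep (l : ℕ) (J : Set ℕ) (lam mu : PartitionSeq) : Prop :=
  ∃ ab : ℕ × ℕ, IsSetRemovable l J lam ab ∧ IsDiagramOf (YoungSet lam \ {ab}) mu

/-- The partial sum `m_p(θ) = θ_0 + ⋯ + θ_p` of a rational vector. -/
def psumQ {l : ℕ} (θ : Fin l → ℚ) (p : Fin l) : ℚ := ∑ j ∈ Finset.Iic p, θ j

/-- The map `s_i : ℚ^l → ℚ^l` (for `1 ≤ i ≤ l-1`). -/
def sAct {l : ℕ} (i : Fin l) (θ : Fin l → ℚ) : Fin l → ℚ := fun p =>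
  if (p : ℕ) = (i : ℕ) - 1 then θ p + θ i
  else if p = i then -θ i
  else if (p : ℕ) = (i : ℕ) + 1 then θ i + θ p
  else θ p


/-!
By (ii), `C(λ)_{[t]} = C̃(λ)_{[t]}`, so everything is a statement about admissible tuples.
Since the entries coming from row `q` are exactly the elements of `χ` that are `≡ q + 1 (mod l)`,
`χ(C̃)` determines and is determined by the rows of `C̃` as sets. For the other direction,
(iii) makes the rows inside a block `I_t` nested, and (iv) continues this chain from `I_d` into
`I_0` shifted by one. Hence, for each `z`, the rows of a block containing `z` form an initial
segment of a chain, which is determined by its length: the multiplicity of `z` in `C̃_{[t]}`.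
-/
open Finset

section Chain

variable {α β : Type*} [LinearOrder β] (f : α → β) {s : Finset α} {P Q : α → Prop}
  [DecidablePred P] [DecidablePred Q]

theorem filter_ssubset_filter_of_downClosed
    (hP : ∀ a ∈ s, ∀ b ∈ s, f a ≤ f b → P b → P a)
    (hQ : ∀ a ∈ s, ∀ b ∈ s, f a ≤ f b → Q b → Q a)
    {a : α} (ha : a ∈ s) (hPa : P a) (hQa : ¬Q a) :
    s.filter Q ⊂ s.filter P := by
  refine (ssubset_iff_of_subset fun b hb => ?_).mpr ⟨a, by simp [ha, hPa], by simp [hQa]⟩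
  rw [mem_filter] at hb ⊢
  refine ⟨hb.1, ?_⟩
  rcases le_total (f a) (f b) with hab | hba
  · exact absurd (hQ a ha b hb.1 hab hb.2) hQa
  · exact hP b hb.1 a ha hba hPa

theorem iff_of_downClosed_of_card_filter_eq
    (hP : ∀ a ∈ s, ∀ b ∈ s, f a ≤ f b → P b → P a)
    (hQ : ∀ a ∈ s, ∀ b ∈ s, f a ≤ f b → Q b → Q a)
    (hcard : #(s.filter P) = #(s.filter Q)) {a : α} (ha : a ∈ s) : P a ↔ Q a := by
  constructor
  · intro hPa
    by_contra hQa
    exact (card_lt_card (filter_ssubset_filter_of_downClosed f hP hQ ha hPa hQa)).ne hcard.symm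
  · intro hQa
    by_contra hPa
    exact (card_lt_card (filter_ssubset_filter_of_downClosed f hQ hP ha hQa hPa)).ne hcard

end Chain

section PartialSums

variable {l : ℕ} (c : Fin l → ℕ)

theorem psum_mono : Monotone (psum c) := fun _ _ h =>
  sum_le_sum_of_subset (Iic_subset_Iic.mpr h)

theorem le_psum (p : Fin l) : c p ≤ psum c p :=
  single_le_sum (fun _ _ => Nat.zero_le _) (mem_Iic.mpr le_rfl)

theorem psum_le_sum (p : Fin l) : psum c p ≤ ∑ j, c j :=
  sum_le_sum_of_subset (subset_univ _)

theorem psum_last (h0 : 0 < l) : psum c ⟨l - 1, by omega⟩ = ∑ j, c j := by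
  unfold psum
  congr 1
  ext j
  simp only [mem_Iic, mem_univ, iff_true, Fin.le_def]
  omega

theorem psum_succ {m : ℕ} (hm : m + 1 < l) :
    psum c ⟨m + 1, hm⟩ = psum c ⟨m, by omega⟩ + c ⟨m + 1, hm⟩ := by
  unfold psum
  rw [show Iic (⟨m + 1, hm⟩ : Fin l) = insert ⟨m + 1, hm⟩ (Iic ⟨m, by omega⟩) by
      ext j; simp only [mem_Iic, mem_insert, Fin.le_def, Fin.ext_iff]; omega,
    sum_insert (by simp [Fin.le_def]), add_comm]

end PartialSums

abbrev boundaryMem {l : ℕ} (d : ℕ) (c : Fin l → ℕ) (Ct : Fin l → ℕ → ℤ) (z : ℤ)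
    (p : Fin l) : Prop :=
  (psum c p = 0 ∧ z + 1 ∈ Set.range (Ct p)) ∨ (psum c p = d ∧ z ∈ Set.range (Ct p))

section Counting

open scoped Classical

variable {l d : ℕ} {c : Fin l → ℕ} {Ct : Fin l → ℕ → ℤ}

theorem natCard_eq_card_filter_mem_range (hinj : ∀ p, Function.Injective (Ct p))
    (P : Fin l → Prop) (z : ℤ) [DecidablePred fun p => P p ∧ z ∈ Set.range (Ct p)] :
    Nat.card {pi : Fin l × ℕ // P pi.1 ∧ Ct pi.1 pi.2 = z} =
      #(univ.filter fun p => P p ∧ z ∈ Set.range (Ct p)) := by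
  let e : {pi : Fin l × ℕ // P pi.1 ∧ Ct pi.1 pi.2 = z} →
      {p : Fin l // P p ∧ z ∈ Set.range (Ct p)} := fun x => ⟨x.1.1, x.2.1, x.1.2, x.2.2⟩
  have he : Function.Bijective e := by
    refine ⟨fun ⟨⟨p, i⟩, hx⟩ ⟨⟨q, j⟩, hy⟩ hxy => ?_,
      fun ⟨p, hP, i, hi⟩ => ⟨⟨(p, i), hP, hi⟩, rfl⟩⟩
    obtain rfl : p = q := congrArg Subtype.val hxy
    obtain rfl : i = j := hinj p (hx.2.trans hy.2.symm)
    rfl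
  rw [Nat.card_congr (Equiv.ofBijective e he), Nat.card_eq_fintype_card, Fintype.card_subtype]

theorem multAt_of_not_boundary (hinj : ∀ p, Function.Injective (Ct p)) {t : ℕ}
    (ht : ¬(t = 0 ∨ t = d)) (z : ℤ) :
    multAt d c Ct t z = #(univ.filter fun p => psum c p = t ∧ z ∈ Set.range (Ct p)) := by
  rw [multAt, if_neg ht]
  exact natCard_eq_card_filter_mem_range hinj (psum c · = t) z

theorem multAt_of_boundary (hd : d ≠ 0) (hinj : ∀ p, Function.Injective (Ct p)) {t : ℕ}
    (ht : t = 0 ∨ t = d) (z : ℤ) :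
    multAt d c Ct t z = #(univ.filter (boundaryMem d c Ct z)) := by
  unfold boundaryMem
  rw [multAt, if_pos ht, filter_or, card_union_of_disjoint
      (disjoint_filter.mpr fun p _ h0 hd' => hd (h0.1 ▸ hd'.1).symm)]
  congr 1
  · simp only [sub_eq_iff_eq_add]
    exact natCard_eq_card_filter_mem_range hinj (psum c · = 0) (z + 1)
  · exact natCard_eq_card_filter_mem_range hinj (psum c · = d) z

end Counting

/-- Orders `I_d` before `I_0`; condition (iv) links the last row to the first, so along this
order the rows of `I_d` and the rows of `I_0` shifted down by one form a single nested chain. -/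
def boundaryKey {l : ℕ} (c : Fin l → ℕ) (p : Fin l) : ℕ :=
  if psum c p = 0 then l + p else p

namespace IsAdmissible

open scoped Classical

variable {l d : ℕ} {c : Fin l → ℕ} {C D Ct Dt : Fin l → ℕ → ℤ}

theorem range_subset_of_psum_eq (h : IsAdmissible d c C Ct) {p q : Fin l} (hpq : p ≤ q)
    (hψ : psum c p = psum c q) : Set.range (Ct q) ⊆ Set.range (Ct p) := by
  suffices ∀ m (hm : m < l), (p : ℕ) ≤ m → psum c ⟨m, hm⟩ ≤ psum c p →
      Set.range (Ct ⟨m, hm⟩) ⊆ Set.range (Ct p) from this q q.isLt hpq hψ.ge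
  intro m hm hpm
  induction m, hpm using Nat.le_induction with
  | base => exact fun _ => le_rfl
  | succ m hpm ih =>
    intro hle
    have hm' : psum c p ≤ psum c ⟨m, by omega⟩ := psum_mono c (Fin.le_def.mpr hpm)
    have hstep := psum_mono c (show (⟨m, by omega⟩ : Fin l) ≤ ⟨m + 1, hm⟩ from
      Fin.le_def.mpr (Nat.le_succ m))
    have hc0 : c ⟨m + 1, hm⟩ = 0 := by have := psum_succ c hm; omega
    rintro _ ⟨i, rfl⟩
    obtain ⟨i', hi'⟩ := h.2.2.1 ⟨m + 1, hm⟩ hc0 (Nat.succ_ne_zero m) i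
    exact ih (by omega) (by omega) ⟨i', hi'⟩

theorem mem_range_iff_of_multAt_eq (hC : IsAdmissible d c C Ct) (hD : IsAdmissible d c D Dt)
    {t : ℕ} (ht : ¬(t = 0 ∨ t = d)) (hmult : ∀ z, multAt d c Ct t z = multAt d c Dt t z)
    {p : Fin l} (hp : psum c p = t) (z : ℤ) :
    z ∈ Set.range (Ct p) ↔ z ∈ Set.range (Dt p) := by
  have hdown {E Et : Fin l → ℕ → ℤ} (h : IsAdmissible d c E Et) :
      ∀ a ∈ univ.filter (psum c · = t), ∀ b ∈ univ.filter (psum c · = t),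
        id a ≤ id b → z ∈ Set.range (Et b) → z ∈ Set.range (Et a) := by
    intro a ha b hb hab
    simp only [mem_filter, mem_univ, true_and] at ha hb
    exact fun hz => h.range_subset_of_psum_eq hab (ha.trans hb.symm) hz
  refine iff_of_downClosed_of_card_filter_eq id (hdown hC) (hdown hD) ?_ (by simpa using hp)
  rw [filter_filter, filter_filter, ← multAt_of_not_boundary (fun q => (hC.1 q).injective) ht,
    ← multAt_of_not_boundary (fun q => (hD.1 q).injective) ht]
  exact hmult z

theorem boundaryMem_downClosed (hd : d ≠ 0) (hc : ∑ j, c j = d) (h : IsAdmissible d c C Ct)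
    (z : ℤ) : ∀ a ∈ univ.filter (fun p => psum c p = 0 ∨ psum c p = d),
      ∀ b ∈ univ.filter (fun p => psum c p = 0 ∨ psum c p = d),
        boundaryKey c a ≤ boundaryKey c b →
          boundaryMem d c Ct z b → boundaryMem d c Ct z a := by
  intro a ha b hb hab hzb
  simp only [mem_filter, mem_univ, true_and] at ha hb
  have h0 : 0 < l := a.pos
  rcases hzb with ⟨hb0, hzb⟩ | ⟨hbd, hzb⟩
  · rcases ha with ha0 | had
    · simp only [boundaryKey, if_pos ha0, if_pos hb0] at hab
      exact Or.inl ⟨ha0, h.range_subset_of_psum_eq (Fin.le_def.mpr (by omega))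
        (ha0.trans hb0.symm) hzb⟩
    · have h0b : (⟨0, h0⟩ : Fin l) ≤ b := Fin.le_def.mpr (Nat.zero_le _)
      have hψ0 : psum c ⟨0, h0⟩ = 0 := by have := psum_mono c h0b; omega
      obtain ⟨i, hi⟩ := h.range_subset_of_psum_eq h0b (hψ0.trans hb0.symm) hzb
      obtain ⟨i', hi'⟩ := h.2.2.2 h0 (by have := le_psum c ⟨0, h0⟩; omega) i
      have hzlast : z ∈ Set.range (Ct ⟨l - 1, by omega⟩) :=
        ⟨i', by rw [hi', hi, add_sub_cancel_right]⟩
      have hlast : a ≤ ⟨l - 1, by omega⟩ := Fin.le_def.mpr (Nat.le_sub_one_of_lt a.isLt)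
      exact Or.inr ⟨had, h.range_subset_of_psum_eq hlast
        (had.trans (psum_last c h0 ▸ hc).symm) hzlast⟩
  · rcases ha with ha0 | had
    · simp only [boundaryKey, if_pos ha0, if_neg (hbd ▸ hd)] at hab
      omega
    · simp only [boundaryKey, if_neg (had ▸ hd), if_neg (hbd ▸ hd)] at hab
      exact Or.inr ⟨had,
        h.range_subset_of_psum_eq (Fin.le_def.mpr hab) (had.trans hbd.symm) hzb⟩

theorem boundaryMem_iff_of_multAt_eq (hd : d ≠ 0) (hc : ∑ j, c j = d)
    (hC : IsAdmissible d c C Ct) (hD : IsAdmissible d c D Dt)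
    (hmult : ∀ z, multAt d c Ct 0 z = multAt d c Dt 0 z)
    {p : Fin l} (hp : psum c p = 0 ∨ psum c p = d) (z : ℤ) :
    boundaryMem d c Ct z p ↔ boundaryMem d c Dt z p := by
  have hdomain (Et : Fin l → ℕ → ℤ) :
      (univ.filter fun p => psum c p = 0 ∨ psum c p = d).filter (boundaryMem d c Et z) =
        univ.filter (boundaryMem d c Et z) := by
    ext q
    simp only [boundaryMem, mem_filter, mem_univ, true_and]
    tauto
  refine iff_of_downClosed_of_card_filter_eq (boundaryKey c)
    (hC.boundaryMem_downClosed hd hc z) (hD.boundaryMem_downClosed hd hc z) ?_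
    (by simpa using hp)
  rw [hdomain, hdomain, ← multAt_of_boundary hd (fun q => (hC.1 q).injective) (Or.inl rfl),
    ← multAt_of_boundary hd (fun q => (hD.1 q).injective) (Or.inl rfl)]
  exact hmult z

theorem multAt_eq_iff_range_eq (hd : d ≠ 0) (hc : ∑ j, c j = d)
    (hC : IsAdmissible d c C Ct) (hD : IsAdmissible d c D Dt) :
    (∀ t ≤ d, ∀ z, multAt d c Ct t z = multAt d c Dt t z) ↔
      ∀ p, Set.range (Ct p) = Set.range (Dt p) := by
  have hCinj := fun q => (hC.1 q).injective
  have hDinj := fun q => (hD.1 q).injective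
  constructor
  · intro hmult p
    ext x
    by_cases hp : psum c p = 0 ∨ psum c p = d
    · have hbdry := hC.boundaryMem_iff_of_multAt_eq hd hc hD (hmult 0 (Nat.zero_le d)) hp
      rcases hp with hp0 | hpd
      · simpa [boundaryMem, hp0, Ne.symm hd] using hbdry (x - 1)
      · simpa [boundaryMem, hpd, hd] using hbdry x
    · exact hC.mem_range_iff_of_multAt_eq hD hp (hmult _ (hc ▸ psum_le_sum c p)) rfl x
  · intro hrange t _ z
    by_cases ht : t = 0 ∨ t = d
    · rw [multAt_of_boundary hd hCinj ht, multAt_of_boundary hd hDinj ht]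
      unfold boundaryMem
      simp only [hrange]
    · simp only [multAt_of_not_boundary hCinj ht, multAt_of_not_boundary hDinj ht, hrange]

end IsAdmissible

section Chi

variable {l : ℕ}

theorem chiSet_eq_iUnion (C : Fin l → ℕ → ℤ) :
    chiSet l C = ⋃ q : Fin l, (fun x => (l : ℤ) * (x - 1) + q + 1) '' Set.range (C q) := by
  ext z
  simp [chiSet, eq_comm]

theorem mem_chiSet_iff (C : Fin l → ℕ → ℤ) (q : Fin l) (x : ℤ) :
    (l : ℤ) * (x - 1) + q + 1 ∈ chiSet l C ↔ x ∈ Set.range (C q) := by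
  constructor
  · rintro ⟨q', i, he⟩
    have hdvd : (l : ℤ) ∣ (q : ℤ) - q' := ⟨C q' i - x, by linarith⟩
    have hq : (q : ℤ) - q' = 0 :=
      Int.eq_zero_of_abs_lt_dvd hdvd (abs_lt.mpr ⟨by omega, by omega⟩)
    obtain rfl : q = q' := Fin.ext (by omega)
    have hl : (l : ℤ) ≠ 0 := by exact_mod_cast q.pos.ne'
    have hx : x - 1 = C q i - 1 :=
      mul_left_cancel₀ hl (show (l : ℤ) * (x - 1) = l * (C q i - 1) by linarith)
    exact ⟨i, by linarith⟩
  · rintro ⟨i, rfl⟩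
    exact ⟨q, i, rfl⟩

theorem chiSet_eq_iff {C D : Fin l → ℕ → ℤ} :
    chiSet l C = chiSet l D ↔ ∀ q, Set.range (C q) = Set.range (D q) := by
  refine ⟨fun h q => Set.ext fun x => ?_, fun h => ?_⟩
  · rw [← mem_chiSet_iff, h, mem_chiSet_iff]
  · simp only [chiSet_eq_iUnion, h]

end Chi

theorem statement3_general (l d : ℕ) (hd : 1 ≤ d)
    (c : Fin l → ℕ) (hc : ∑ j, c j = d)
    (r : Fin l → ℤ)
    (w : Equiv.Perm (Fin l))
    (Λ M : Fin l → PartitionSeq)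
    (CtΛ CtM : Fin l → ℕ → ℤ)
    (hCtΛ : IsAdmissible d c (fun p => (Λ (w⁻¹ p)).beta (r p)) CtΛ)
    (hCtM : IsAdmissible d c (fun p => (M (w⁻¹ p)).beta (r p)) CtM) :
    chiSet l CtΛ = chiSet l CtM ↔
      ∀ t ≤ d, ∀ z : ℤ,
        multAt d c (fun p => (Λ (w⁻¹ p)).beta (r p)) t z =
          multAt d c (fun p => (M (w⁻¹ p)).beta (r p)) t z := by
  rw [chiSet_eq_iff, ← hCtΛ.multAt_eq_iff_range_eq (by omega) hc hCtM]
  refine forall₂_congr fun t ht => forall_congr' fun z => ?_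
  rw [hCtΛ.2.1 t ht z, hCtM.2.1 t ht z]

/-- for two `l`-multipartitions `λ, μ` of `n` with admissible tuples
`C̃(λ)`, `C̃(μ)` for `C(λ)`, `C(μ)`: `χ(C̃(λ)) = χ(C̃(μ))` (i.e. the `J`-hearts coincide)
iff `C(λ)_{[t]} = C(μ)_{[t]}` as multisets for all `0 ≤ t ≤ d`. -/
theorem statement3 (l n d : ℕ) (hl : 1 ≤ l) (hd : 1 ≤ d)
    (c : Fin l → ℕ) (hc : ∑ j, c j = d)
    (r : Fin l → ℤ) (hr : ∑ j, r j = 0)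
    (w : Equiv.Perm (Fin l))
    (Λ M : Fin l → PartitionSeq)
    (hΛ : ∑ p, (Λ p).size = n) (hM : ∑ p, (M p).size = n)
    (CtΛ CtM : Fin l → ℕ → ℤ)
    (hCtΛ : IsAdmissible d c (fun p => (Λ (w⁻¹ p)).beta (r p)) CtΛ)
    (hCtM : IsAdmissible d c (fun p => (M (w⁻¹ p)).beta (r p)) CtM) :
    chiSet l CtΛ = chiSet l CtM ↔
      ∀ t ≤ d, ∀ z : ℤ,
        multAt d c (fun p => (Λ (w⁻¹ p)).beta (r p)) t z =
          multAt d c (fun p => (M (w⁻¹ p)).beta (r p)) t z :=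
  statement3_general l d hd c hc r w Λ M CtΛ CtM hCtΛ hCtM
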